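/- Let H be a 4-dimensional real vector space, Q a 2-dimensional real vector space, and L : H × H → Q an alternating ℝ-bilinear map such that the Λ⁴H*-valued symmetric bilinear form (ψ, φ) ↦ (ψ∘L) ∧ (φ∘L) on Q* is nondegenerate and such that (ψ₀∘L) ∧ (ψ₀∘L) = 0 for some nonzero ψ₀ ∈ Q*. Then there exist 2-dimensional subspaces H₊ and H₋ of H with H = H₊ ⊕ H₋, with L(x,y) = 0 for all x ∈ H₊ and y ∈ H₋, and such that Q₊ = span{L(x,y) : x,y ∈ H₊} and Q₋ = span{L(x,y) : x,y ∈ H₋} are one-dimensional with Q = Q₊ ⊕ Q₋; moreover the unordered pair {H₊, H₋} with these properties is unique. -/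

import Mathlib

/-! The pairing `β(ψ, φ) = (ψ ∘ L) ∧ (φ ∘ L)` is a symmetric form on the plane `Q*`; being
nondegenerate with an isotropic vector `ψ₀`, it makes `Q*` a hyperbolic plane, whose only isotropic
lines are spanned by `ψ₀` and some `ψ₁` with `β(ψ₀, ψ₁) ≠ 0`. For isotropic `ψ` with `ψ ∘ L ≠ 0`
the 2-form `ψ ∘ L` is decomposable, so its kernel is a plane; the splitting is
`H₊ = ker (ψ₁ ∘ L)`, `H₋ = ker (ψ₀ ∘ L)`. The key observation is that a nonzero common kernel vector
of `ψ ∘ L` and `φ ∘ L` forces `β(ψ, φ) = 0`: this gives `H₊ ∩ H₋ = 0`, and, for an arbitrary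
splitting `(A, B)`, it makes isotropic the functional `ψ` killing the line `span L(B, B)`, because
`B ⊆ ker (ψ ∘ L)`. Hence `ψ` is proportional to `ψ₀` or `ψ₁`, and `B` is `H₋` or `H₊`. -/

/-- The wedge product of two alternating bilinear forms on a real vector space,
evaluated on four vectors via the (2,2)-shuffle formula. -/
def wedge22 {V : Type*} (ω η : V → V → ℝ) (x y z w : V) : ℝ :=
  ω x y * η z w - ω x z * η y w + ω x w * η y z
    + ω y z * η x w - ω y w * η x z + ω z w * η x y

/-- The subspace of `Q` spanned by the values of `L` on a subspace `H'` of `H`. -/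
def valuesSpan {H Q : Type*} [AddCommGroup H] [Module ℝ H]
    [AddCommGroup Q] [Module ℝ Q] (L : H →ₗ[ℝ] H →ₗ[ℝ] Q)
    (H' : Submodule ℝ H) : Submodule ℝ Q :=
  Submodule.span ℝ {q : Q | ∃ x ∈ H', ∃ y ∈ H', L x y = q}

/-- The defining properties of the canonical splitting in the hyperbolic case:
`H = H₊ ⊕ H₋` into 2-dimensional subspaces with `L(H₊, H₋) = 0`, and the spans
`Q± = span L(H±, H±)` are one-dimensional with `Q = Q₊ ⊕ Q₋`. -/
def IsHyperbolicSplitting {H Q : Type*} [AddCommGroup H] [Module ℝ H]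
    [AddCommGroup Q] [Module ℝ Q] (L : H →ₗ[ℝ] H →ₗ[ℝ] Q)
    (Hp Hm : Submodule ℝ H) : Prop :=
  Module.finrank ℝ Hp = 2 ∧ Module.finrank ℝ Hm = 2 ∧ IsCompl Hp Hm ∧
    (∀ x ∈ Hp, ∀ y ∈ Hm, L x y = 0) ∧
    Module.finrank ℝ (valuesSpan L Hp) = 1 ∧
    Module.finrank ℝ (valuesSpan L Hm) = 1 ∧
    IsCompl (valuesSpan L Hp) (valuesSpan L Hm)

open Module

section

variable {K V : Type*} [Field K] [AddCommGroup V] [Module K V]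

structure LinearMap.BilinForm.IsHyperbolicPair (B : LinearMap.BilinForm K V) (x y : V) : Prop where
  isotropic_left : B x x = 0
  isotropic_right : B y y = 0
  apply_ne_zero : B x y ≠ 0

namespace LinearMap.BilinForm

variable {B : LinearMap.BilinForm K V}

theorem IsSymm.exists_isHyperbolicPair [NeZero (2 : K)] (hB : B.IsSymm) {x y : V} (hx : B x x = 0)
    (hxy : B x y ≠ 0) : ∃ z, B.IsHyperbolicPair x z := by
  refine ⟨y - (B y y / (2 * B x y)) • x, hx, ?_, by simpa [hx] using hxy⟩
  have h2 : (2 : K) ≠ 0 := two_ne_zero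
  simp only [map_sub, map_smul, LinearMap.sub_apply, LinearMap.smul_apply, smul_eq_mul, hx,
    hB.eq y x]
  field_simp
  ring

theorem IsHyperbolicPair.symm (hB : B.IsSymm) {x y : V} (h : B.IsHyperbolicPair x y) :
    B.IsHyperbolicPair y x :=
  ⟨h.isotropic_right, h.isotropic_left, hB.eq x y ▸ h.apply_ne_zero⟩

theorem IsHyperbolicPair.linearIndependent {x y : V} (h : B.IsHyperbolicPair x y) :
    LinearIndependent K ![x, y] := by
  rw [LinearIndependent.pair_iff]
  intro s t hst
  have ht : t = 0 := by
    simpa [h.isotropic_left, h.apply_ne_zero] using congrArg (B x) hst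
  have hx : x ≠ 0 := by
    rintro rfl
    exact h.apply_ne_zero (by simp)
  exact ⟨by simpa [ht, hx] using hst, ht⟩

theorem IsHyperbolicPair.mem_span_singleton_of_isotropic [NeZero (2 : K)] [FiniteDimensional K V]
    (hV : finrank K V = 2) (hB : B.IsSymm) {x y z : V} (h : B.IsHyperbolicPair x y)
    (hz : B z z = 0) : z ∈ K ∙ x ∨ z ∈ K ∙ y := by
  have hspan := h.linearIndependent.span_eq_top_of_card_eq_finrank' (by simp [hV])
  have hz' : z ∈ Submodule.span K (Set.range ![x, y]) := hspan ▸ Submodule.mem_top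
  obtain ⟨c, rfl⟩ := (Submodule.mem_span_range_iff_exists_fun K).mp hz'
  have hc : 2 * (c 0 * c 1) * B x y = 0 := by
    simp [Fin.sum_univ_two, h.isotropic_left, h.isotropic_right, hB.eq y x] at hz
    linear_combination hz
  rcases mul_eq_zero.mp ((mul_eq_zero.mp hc).resolve_right h.apply_ne_zero) with h2 | hc
  · exact absurd h2 two_ne_zero
  rcases mul_eq_zero.mp hc with h0 | h1
  · exact Or.inr (Submodule.mem_span_singleton.mpr ⟨c 1, by simp [Fin.sum_univ_two, h0]⟩)
  · exact Or.inl (Submodule.mem_span_singleton.mpr ⟨c 0, by simp [Fin.sum_univ_two, h1]⟩)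

end LinearMap.BilinForm

theorem eq_zero_of_forall_dual_apply_eq_zero {ι : Type*} [Fintype ι] [FiniteDimensional K V]
    {ψ : ι → Dual K V} (hψ : LinearIndependent K ψ) (hcard : Fintype.card ι = finrank K V)
    {v : V} (hv : ∀ i, ψ i v = 0) : v = 0 := by
  have hspan := hψ.span_eq_top_of_card_eq_finrank' (hcard.trans Subspace.dual_finrank_eq.symm)
  have heval : Dual.eval K V v = 0 := LinearMap.ext_on_range hspan hv
  exact (forall_dual_apply_eq_zero_iff K v).mp (LinearMap.congr_fun heval)

theorem Submodule.finrank_eq_one_of_disjoint [FiniteDimensional K V] (hV : finrank K V = 2)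
    {A B : Submodule K V} (hA : A ≠ ⊥) (hB : B ≠ ⊥) (hAB : Disjoint A B) :
    finrank K A = 1 ∧ finrank K B = 1 ∧ IsCompl A B := by
  have hsum := Submodule.finrank_sup_add_finrank_inf_eq A B
  have hsup := Submodule.finrank_le (A ⊔ B)
  rw [hAB.eq_bot, finrank_bot] at hsum
  have hA1 : finrank K A ≠ 0 := Submodule.finrank_eq_zero.not.mpr hA
  have hB1 : finrank K B ≠ 0 := Submodule.finrank_eq_zero.not.mpr hB
  exact ⟨by omega, by omega, (Submodule.isCompl_iff_disjoint A B (by omega)).mpr hAB⟩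

end

theorem Module.Basis.det_update {R M ι : Type*} [CommRing R] [AddCommGroup M] [Module R M]
    [Fintype ι] [DecidableEq ι] (e : Basis ι R M) (i : ι) (x : M) :
    e.det (Function.update e i x) = e.repr x i := by
  rw [Basis.det_apply, Basis.toMatrix_update, Basis.toMatrix_self, ← Matrix.cramer_apply,
    Matrix.cramer_one]
  rfl

section Wedge

variable {V : Type*} [AddCommGroup V] [Module ℝ V] {ω η : LinearMap.BilinForm ℝ V}

noncomputable def wedgeAlternatingMap (hω : ω.IsAlt) (hη : η.IsAlt) : V [⋀^Fin 4]→ₗ[ℝ] ℝ where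
  toFun v := wedge22 (ω · ·) (η · ·) (v 0) (v 1) (v 2) (v 3)
  map_update_add' v i x y := by
    obtain rfl : ‹DecidableEq (Fin 4)› = instDecidableEqFin 4 := Subsingleton.elim _ _
    fin_cases i <;> simp [wedge22] <;> ring
  map_update_smul' v i c x := by
    obtain rfl : ‹DecidableEq (Fin 4)› = instDecidableEqFin 4 := Subsingleton.elim _ _
    fin_cases i <;> simp [wedge22] <;> ring
  map_eq_zero_of_eq' v i j hv hij := by
    have hωs := LinearMap.IsAlt.neg hω
    have hηs := LinearMap.IsAlt.neg hη
    fin_cases i <;> fin_cases j <;> simp only [wedge22] at hv hij ⊢ <;> grind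

/-- Alternating `4`-forms on a `4`-dimensional space are multiples of the determinant. -/
theorem wedge22_eq_mul_det (hω : ω.IsAlt) (hη : η.IsAlt) (e : Basis (Fin 4) ℝ V) (x y z w : V) :
    wedge22 (ω · ·) (η · ·) x y z w =
      wedge22 (ω · ·) (η · ·) (e 0) (e 1) (e 2) (e 3) * e.det ![x, y, z, w] :=
  congrArg (· ![x, y, z, w]) ((wedgeAlternatingMap hω hη).eq_smul_basis_det e)

theorem wedge22_eq_zero_of_apply_eq_zero [FiniteDimensional ℝ V] (hV : finrank ℝ V = 4)
    (hω : ω.IsAlt) (hη : η.IsAlt) {x : V} (hx : x ≠ 0) (hωx : ω x = 0) (hηx : η x = 0)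
    (y z w u : V) : wedge22 (ω · ·) (η · ·) y z w u = 0 := by
  let e := finBasisOfFinrankEq ℝ V hV
  obtain ⟨i, hi⟩ := Finsupp.ne_iff.mp (e.repr.map_ne_zero_iff.mpr hx)
  have hωx' : ∀ y, ω y x = 0 := fun y => by rw [← LinearMap.IsAlt.neg hω, hωx]; simp
  have hηx' : ∀ y, η y x = 0 := fun y => by rw [← LinearMap.IsAlt.neg hη, hηx]; simp
  have hupdate : wedgeAlternatingMap hω hη (Function.update e i x) = 0 := by
    fin_cases i <;> simp [wedgeAlternatingMap, wedge22, hωx, hηx, hωx', hηx']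
  rw [(wedgeAlternatingMap hω hη).eq_smul_basis_det e, AlternatingMap.smul_apply, smul_eq_mul,
    Basis.det_update] at hupdate
  rw [wedge22_eq_mul_det hω hη e]
  exact mul_eq_zero_of_left ((mul_eq_zero.mp hupdate).resolve_right hi) _

theorem finrank_ker_eq_two_of_wedge22_self [FiniteDimensional ℝ V] (hV : finrank ℝ V = 4)
    (hω : ω.IsAlt) (hω0 : ω ≠ 0) (hωω : ∀ x y z w, wedge22 (ω · ·) (ω · ·) x y z w = 0) :
    finrank ℝ (LinearMap.ker ω) = 2 := by
  obtain ⟨a, b, hab⟩ : ∃ a b, ω a b = 1 := by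
    by_contra! h
    refine hω0 (LinearMap.ext₂ fun a b => ?_)
    by_contra hab
    exact h ((ω a b)⁻¹ • a) b (by simpa using inv_mul_cancel₀ hab)
  let f : V →ₗ[ℝ] ℝ × ℝ := (ω.flip a).prod (ω.flip b)
  have hba : ω b a = -1 := by rw [← LinearMap.IsAlt.neg hω, hab]
  have hf : LinearMap.range f = ⊤ := by
    refine LinearMap.range_eq_top.mpr fun ⟨s, t⟩ => ⟨t • a - s • b, ?_⟩
    simp [f, hω.self_eq_zero, hab, hba]
  -- `ω ∧ ω = 0` makes `ω` decomposable: `ω x y = ω x a * ω y b - ω x b * ω y a`.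
  have hker : LinearMap.ker ω = LinearMap.ker f := by
    ext x
    simp only [LinearMap.mem_ker, f, LinearMap.prod_apply, Function.prod, Prod.mk_eq_zero]
    refine ⟨fun h => by simp [h], fun ⟨hxa, hxb⟩ => LinearMap.ext fun y => ?_⟩
    have hxa : ω x a = 0 := hxa
    have hxb : ω x b = 0 := hxb
    have := hωω x y a b
    simp only [wedge22, hab, hxa, hxb] at this
    simp only [LinearMap.zero_apply]
    linarith
  have := LinearMap.finrank_range_add_finrank_ker f
  rw [hf, finrank_top, finrank_prod, finrank_self, hV] at this
  rw [hker]
  omega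

end Wedge

section Splitting

variable {H Q : Type*} [AddCommGroup H] [Module ℝ H] [AddCommGroup Q] [Module ℝ Q]
  {L : H →ₗ[ℝ] H →ₗ[ℝ] Q}

/-- The value at `v` of the `Λ⁴H*`-valued pairing `(ψ, φ) ↦ (ψ ∘ L) ∧ (φ ∘ L)` on `Q*`. -/
noncomputable def wedgePairing (L : H →ₗ[ℝ] H →ₗ[ℝ] Q) (v : Fin 4 → H) :
    LinearMap.BilinForm ℝ (Dual ℝ Q) :=
  LinearMap.mk₂ ℝ
    (fun ψ φ => wedge22 (fun a b => ψ (L a b)) (fun a b => φ (L a b)) (v 0) (v 1) (v 2) (v 3))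
    (fun _ _ _ => by simp only [wedge22, LinearMap.add_apply]; ring)
    (fun _ _ _ => by simp only [wedge22, LinearMap.smul_apply, smul_eq_mul]; ring)
    (fun _ _ _ => by simp only [wedge22, LinearMap.add_apply]; ring)
    (fun _ _ _ => by simp only [wedge22, LinearMap.smul_apply, smul_eq_mul]; ring)

theorem wedgePairing_apply (v : Fin 4 → H) (ψ φ : Dual ℝ Q) :
    wedgePairing L v ψ φ =
      wedge22 (fun a b => ψ (L a b)) (fun a b => φ (L a b)) (v 0) (v 1) (v 2) (v 3) :=
  rfl

theorem isSymm_wedgePairing (v : Fin 4 → H) : (wedgePairing L v).IsSymm :=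
  ⟨fun ψ φ => by simp only [wedgePairing_apply, wedge22]; ring⟩

theorem isAlt_compr₂ (hL : ∀ x, L x x = 0) (ψ : Dual ℝ Q) : (L.compr₂ ψ).IsAlt :=
  fun x => by simp [hL]

theorem wedge22_eq_wedgePairing_mul_det (hL : ∀ x, L x x = 0) (e : Basis (Fin 4) ℝ H)
    (ψ φ : Dual ℝ Q) (x y z w : H) :
    wedge22 (fun a b => ψ (L a b)) (fun a b => φ (L a b)) x y z w =
      wedgePairing L e ψ φ * e.det ![x, y, z, w] :=
  wedge22_eq_mul_det (isAlt_compr₂ hL ψ) (isAlt_compr₂ hL φ) e x y z w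

theorem wedgePairing_eq_zero_of_mem_ker [FiniteDimensional ℝ H] (hH : finrank ℝ H = 4)
    (hL : ∀ x, L x x = 0) {ψ φ : Dual ℝ Q} {x : H} (hx : x ≠ 0)
    (hψ : x ∈ LinearMap.ker (L.compr₂ ψ)) (hφ : x ∈ LinearMap.ker (L.compr₂ φ))
    (v : Fin 4 → H) : wedgePairing L v ψ φ = 0 :=
  wedge22_eq_zero_of_apply_eq_zero hH (isAlt_compr₂ hL ψ) (isAlt_compr₂ hL φ) hx hψ hφ _ _ _ _

theorem compr₂_ne_zero_of_wedgePairing_ne_zero {v : Fin 4 → H} {ψ φ : Dual ℝ Q}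
    (h : wedgePairing L v ψ φ ≠ 0) : L.compr₂ ψ ≠ 0 := by
  intro hψ
  have hψ' : ∀ a b, ψ (L a b) = 0 := fun a b => LinearMap.congr_fun₂ hψ a b
  exact h (by simp [wedgePairing_apply, wedge22, hψ'])

theorem finrank_ker_compr₂_of_isHyperbolicPair [FiniteDimensional ℝ H] (hH : finrank ℝ H = 4)
    (hL : ∀ x, L x x = 0) {e : Basis (Fin 4) ℝ H} {ψ φ : Dual ℝ Q}
    (hp : (wedgePairing L e).IsHyperbolicPair ψ φ) :
    finrank ℝ (LinearMap.ker (L.compr₂ ψ)) = 2 :=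
  finrank_ker_eq_two_of_wedge22_self hH (isAlt_compr₂ hL ψ)
    (compr₂_ne_zero_of_wedgePairing_ne_zero hp.apply_ne_zero) fun x y z w =>
      (wedge22_eq_wedgePairing_mul_det hL e ψ ψ x y z w).trans (by rw [hp.isotropic_left, zero_mul])

theorem ker_compr₂_smul (ψ : Dual ℝ Q) {c : ℝ} (hc : c ≠ 0) :
    LinearMap.ker (L.compr₂ (c • ψ)) = LinearMap.ker (L.compr₂ ψ) := by
  rw [show L.compr₂ (c • ψ) = c • L.compr₂ ψ by ext; simp, LinearMap.ker_smul _ _ hc]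

theorem valuesSpan_ker_compr₂_le (ψ : Dual ℝ Q) :
    valuesSpan L (LinearMap.ker (L.compr₂ ψ)) ≤ LinearMap.ker ψ := by
  rw [valuesSpan, Submodule.span_le]
  rintro _ ⟨x, hx, y, -, rfl⟩
  exact LinearMap.congr_fun hx y

theorem valuesSpan_ne_bot {A : Submodule ℝ H} {ψ : Dual ℝ Q}
    (hA : IsCompl A (LinearMap.ker (L.compr₂ ψ)))
    (hLA : ∀ x ∈ A, ∀ y ∈ LinearMap.ker (L.compr₂ ψ), L x y = 0) (hA0 : A ≠ ⊥) :
    valuesSpan L A ≠ ⊥ := by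
  intro hv
  refine hA0 (eq_bot_iff.mpr fun x hx => hA.disjoint.le_bot ⟨hx, ?_⟩)
  have hLx : A ⊔ LinearMap.ker (L.compr₂ ψ) ≤ LinearMap.ker (L x) :=
    sup_le (fun y hy => (Submodule.mem_bot ℝ).mp (hv ▸ Submodule.subset_span ⟨x, hx, y, hy, rfl⟩))
      (hLA x hx)
  rw [hA.sup_eq_top, top_le_iff, LinearMap.ker_eq_top] at hLx
  ext y
  simp [hLx]

theorem IsHyperbolicSplitting.symm (hL : ∀ x, L x x = 0) {A B : Submodule ℝ H}
    (hs : IsHyperbolicSplitting L A B) : IsHyperbolicSplitting L B A := by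
  obtain ⟨hA, hB, hAB, hLAB, hQA, hQB, hQAB⟩ := hs
  refine ⟨hB, hA, hAB.symm, fun x hx y hy => ?_, hQB, hQA, hQAB.symm⟩
  rw [← LinearMap.IsAlt.neg hL, hLAB y hy x hx, neg_zero]

theorem IsHyperbolicSplitting.ne {A B : Submodule ℝ H} (hs : IsHyperbolicSplitting L A B) :
    A ≠ B := by
  rintro rfl
  obtain ⟨hA2, -, hAA, -⟩ := hs
  rw [disjoint_self.mp hAA.disjoint, finrank_bot] at hA2
  omega

variable [FiniteDimensional ℝ H] [FiniteDimensional ℝ Q] {e : Basis (Fin 4) ℝ H} {ψ₀ ψ₁ : Dual ℝ Q}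

theorem isHyperbolicSplitting_ker_compr₂ (hH : finrank ℝ H = 4) (hQ : finrank ℝ Q = 2)
    (hL : ∀ x, L x x = 0) (hp : (wedgePairing L e).IsHyperbolicPair ψ₀ ψ₁) :
    IsHyperbolicSplitting L (LinearMap.ker (L.compr₂ ψ₁)) (LinearMap.ker (L.compr₂ ψ₀)) := by
  set Hp := LinearMap.ker (L.compr₂ ψ₁)
  set Hm := LinearMap.ker (L.compr₂ ψ₀)
  have hsep : ∀ q, ψ₀ q = 0 → ψ₁ q = 0 → q = 0 := fun q h₀ h₁ =>
    eq_zero_of_forall_dual_apply_eq_zero hp.linearIndependent (by simp [hQ])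
      (Fin.forall_fin_two.mpr ⟨h₀, h₁⟩)
  have hp2 : finrank ℝ Hp = 2 :=
    finrank_ker_compr₂_of_isHyperbolicPair hH hL (hp.symm (isSymm_wedgePairing e))
  have hm2 : finrank ℝ Hm = 2 := finrank_ker_compr₂_of_isHyperbolicPair hH hL hp
  have hdisj : Disjoint Hp Hm := Submodule.disjoint_def.mpr fun x hx₁ hx₀ => by
    by_contra hx
    exact hp.apply_ne_zero (wedgePairing_eq_zero_of_mem_ker hH hL hx hx₀ hx₁ e)
  have hcompl : IsCompl Hp Hm := (Submodule.isCompl_iff_disjoint _ _ (by omega)).mpr hdisj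
  have hLpm : ∀ x ∈ Hp, ∀ y ∈ Hm, L x y = 0 := fun x hx y hy => hsep _
    (by rw [← LinearMap.IsAlt.neg hL, map_neg, neg_eq_zero]; exact LinearMap.congr_fun hy x)
    (LinearMap.congr_fun hx y)
  have hLmp : ∀ x ∈ Hm, ∀ y ∈ Hp, L x y = 0 := fun x hx y hy => by
    rw [← LinearMap.IsAlt.neg hL, hLpm y hy x hx, neg_zero]
  have hvdisj : Disjoint (valuesSpan L Hp) (valuesSpan L Hm) :=
    Submodule.disjoint_def.mpr fun q hqp hqm =>
      hsep q (valuesSpan_ker_compr₂_le ψ₀ hqm) (valuesSpan_ker_compr₂_le ψ₁ hqp)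
  obtain ⟨hvp, hvm, hvcompl⟩ := Submodule.finrank_eq_one_of_disjoint hQ
    (valuesSpan_ne_bot hcompl hLpm (Submodule.finrank_eq_zero.not.mp (by omega)))
    (valuesSpan_ne_bot hcompl.symm hLmp (Submodule.finrank_eq_zero.not.mp (by omega))) hvdisj
  exact ⟨hp2, hm2, hcompl, hLpm, hvp, hvm, hvcompl⟩

theorem eq_ker_compr₂_of_isHyperbolicSplitting (hH : finrank ℝ H = 4) (hQ : finrank ℝ Q = 2)
    (hL : ∀ x, L x x = 0) (hp : (wedgePairing L e).IsHyperbolicPair ψ₀ ψ₁) {A B : Submodule ℝ H}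
    (hs : IsHyperbolicSplitting L A B) :
    B = LinearMap.ker (L.compr₂ ψ₀) ∨ B = LinearMap.ker (L.compr₂ ψ₁) := by
  obtain ⟨hA2, hB2, hAB, hLAB, -, hvB, -⟩ := hs
  obtain ⟨ψ, hψ, hψB⟩ := Submodule.exists_dual_map_eq_bot_of_lt_top
    (Submodule.lt_top_of_finrank_lt_finrank (by omega : finrank ℝ (valuesSpan L B) < finrank ℝ Q))
    inferInstance
  have hBψ : B ≤ LinearMap.ker (L.compr₂ ψ) := fun x hx => by
    refine LinearMap.mem_ker.mpr (LinearMap.ext fun y => ?_)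
    obtain ⟨a, ha, b, hb, rfl⟩ := Submodule.mem_sup.mp (hAB.sup_eq_top ▸ Submodule.mem_top (x := y))
    have hxa : L x a = 0 := by rw [← LinearMap.IsAlt.neg hL, hLAB a ha x hx, neg_zero]
    have hxb : ψ (L x b) = 0 := (Submodule.mem_bot ℝ).mp
      (hψB ▸ Submodule.mem_map_of_mem (Submodule.subset_span ⟨x, hx, b, hb, rfl⟩))
    simp [hxa, hxb]
  have hψψ : wedgePairing L e ψ ψ = 0 := by
    obtain ⟨x, hxB, hx⟩ :=
      Submodule.exists_mem_ne_zero_of_ne_bot (p := B) (Submodule.finrank_eq_zero.not.mp (by omega))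
    exact wedgePairing_eq_zero_of_mem_ker hH hL hx (hBψ hxB) (hBψ hxB) e
  have hQ' : finrank ℝ (Dual ℝ Q) = 2 := by simp [hQ]
  have hKB {ψ' φ' : Dual ℝ Q} (hp' : (wedgePairing L e).IsHyperbolicPair ψ' φ') {c : ℝ}
      (hψ' : c • ψ' = ψ) : B = LinearMap.ker (L.compr₂ ψ') := by
    have hc : c ≠ 0 := by
      rintro rfl
      exact hψ (by rw [← hψ', zero_smul])
    rw [← hψ', ker_compr₂_smul ψ' hc] at hBψ
    exact Submodule.eq_of_le_of_finrank_eq hBψ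
      (by rw [hB2, finrank_ker_compr₂_of_isHyperbolicPair hH hL hp'])
  rcases hp.mem_span_singleton_of_isotropic hQ' (isSymm_wedgePairing e) hψψ with h | h <;>
    obtain ⟨c, hc⟩ := Submodule.mem_span_singleton.mp h
  · exact Or.inl (hKB hp hc)
  · exact Or.inr (hKB (hp.symm (isSymm_wedgePairing e)) hc)

end Splitting

/-- **Pointwise core of Theorem 2 (hyperbolic case).** Let `L : H × H → Q` be an
alternating bilinear map, `dim H = 4`, `dim Q = 2`, such that the `Λ⁴H*`-valued
symmetric bilinear form `(ψ,φ) ↦ (ψ∘L) ∧ (φ∘L)` on `Q*` is nondegenerate and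
isotropic (hyperbolicity). Then there is a splitting `H = H₊ ⊕ H₋` into
2-dimensional subspaces with `L(H₊,H₋) = 0` whose value spans give a splitting
`Q = Q₊ ⊕ Q₋` into lines, and the unordered pair `{H₊, H₋}` is unique. -/
theorem stmt5 (H Q : Type*) [AddCommGroup H] [Module ℝ H] [FiniteDimensional ℝ H]
    [AddCommGroup Q] [Module ℝ Q] [FiniteDimensional ℝ Q]
    (hH : Module.finrank ℝ H = 4) (hQ : Module.finrank ℝ Q = 2)
    (L : H →ₗ[ℝ] H →ₗ[ℝ] Q) (halt : ∀ x : H, L x x = 0)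
    (hnd : ∀ ψ : Module.Dual ℝ Q, ψ ≠ 0 → ∃ φ : Module.Dual ℝ Q,
      ∃ x y z w : H,
        wedge22 (fun a b => ψ (L a b)) (fun a b => φ (L a b)) x y z w ≠ 0)
    (hiso : ∃ ψ₀ : Module.Dual ℝ Q, ψ₀ ≠ 0 ∧ ∀ x y z w : H,
        wedge22 (fun a b => ψ₀ (L a b)) (fun a b => ψ₀ (L a b)) x y z w = 0) :
    ∃ Hp Hm : Submodule ℝ H, IsHyperbolicSplitting L Hp Hm ∧
      ∀ Hp' Hm' : Submodule ℝ H, IsHyperbolicSplitting L Hp' Hm' →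
        (Hp' = Hp ∧ Hm' = Hm) ∨ (Hp' = Hm ∧ Hm' = Hp) := by
  obtain ⟨ψ₀, hψ₀, hψ₀ψ₀⟩ := hiso
  let e := finBasisOfFinrankEq ℝ H hH
  obtain ⟨φ, x, y, z, w, hφ⟩ := hnd ψ₀ hψ₀
  have hψ₀φ : wedgePairing L e ψ₀ φ ≠ 0 := fun h =>
    hφ (by rw [wedge22_eq_wedgePairing_mul_det halt e, h, zero_mul])
  obtain ⟨ψ₁, hp⟩ := (isSymm_wedgePairing e).exists_isHyperbolicPair
    (hψ₀ψ₀ (e 0) (e 1) (e 2) (e 3)) hψ₀φ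
  refine ⟨_, _, isHyperbolicSplitting_ker_compr₂ hH hQ halt hp, fun A B hs => ?_⟩
  rcases eq_ker_compr₂_of_isHyperbolicSplitting hH hQ halt hp hs with hB | hB <;>
    rcases eq_ker_compr₂_of_isHyperbolicSplitting hH hQ halt hp (hs.symm halt) with hA | hA
  · exact absurd (hA.trans hB.symm) hs.ne
  · exact Or.inl ⟨hA, hB⟩
  · exact Or.inr ⟨hA, hB⟩
  · exact absurd (hA.trans hB.symm) hs.ne
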